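/- Let X ⊆ Y be nonempty finite sets of jobs (with sizes in (0, g(m)]). Then z⋄(X) ∈ A_i for some i ∈ T(z⋄(Y)); equivalently, the highest machine type used by the alternative machine configuration for X lies in one of the subtrees rooted at the nodes of T(z⋄(Y)), hence is at most z⋄(Y). -/

import Mathlib

open scoped Classical
open Finset MeasureTheory

namespace BSHM

noncomputable section

/-- The set of candidate parents of machine type `i`: types `j ∈ M` with `j > i`
and a strictly smaller normalized cost rate per capacity unit. -/
def pset (m : ℕ) (g r : ℕ → ℝ) (i : ℕ) : Set ℕ :=
  {j | j ≤ m ∧ i < j ∧ r j / g j < r i / g i}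

/-- The parent `p i` of machine type `i` (equal to `0` when the parent is undefined,
since any actual parent has index `≥ 2`). -/
def p (m : ℕ) (g r : ℕ → ℝ) (i : ℕ) : ℕ := sInf (pset m g r i)

/-- `pdef i` asserts that the parent of `i` is defined. -/
def pdef (m : ℕ) (g r : ℕ → ℝ) (i : ℕ) : Prop := (pset m g r i).Nonempty

/-- One step of the parent relation: `b` is the (defined) parent of `a`. -/
def pstep (m : ℕ) (g r : ℕ → ℝ) (a b : ℕ) : Prop :=
  pdef m g r a ∧ b = p m g r a

/-- `P i`: the set consisting of `i` together with all of its iterated parents. -/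
def P (m : ℕ) (g r : ℕ → ℝ) (i : ℕ) : Set ℕ :=
  {z | Relation.ReflTransGen (pstep m g r) i z}

/-- `A i`: the set of nodes in the tree rooted at `i`,
i.e. all `z ∈ M` having `i` as an ancestor (or equal to `i`). -/
def A (m : ℕ) (g r : ℕ → ℝ) (i : ℕ) : Set ℕ :=
  {z | 1 ≤ z ∧ z ≤ m ∧ i ∈ P m g r z}

/-- `v i`: the lowest-indexed node in the tree rooted at `i`. -/
def v (m : ℕ) (g r : ℕ → ℝ) (i : ℕ) : ℕ := sInf (A m g r i)

/-- `y i`: the younger siblings of `i` (same parent status, smaller index). -/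
def y (m : ℕ) (g r : ℕ → ℝ) (i : ℕ) : Set ℕ :=
  {z | 1 ≤ z ∧ z ≤ m ∧ z < i ∧ p m g r z = p m g r i}

/-- `esib i`: the elder siblings of `i`. -/
def esib (m : ℕ) (g r : ℕ → ℝ) (i : ℕ) : Set ℕ :=
  {z | 1 ≤ z ∧ z ≤ m ∧ i < z ∧ p m g r z = p m g r i}

/-- `T k := {k} ∪ ⋃_{z ∈ P(k)} y(z)`. -/
def T (m : ℕ) (g r : ℕ → ℝ) (k : ℕ) : Set ℕ :=
  {k} ∪ ⋃ z ∈ P m g r k, y m g r z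

/-- `T k` as a `Finset` (all relevant nodes lie in `{k} ∪ [1, m]`). -/
def TIcc (m : ℕ) (g r : ℕ → ℝ) (k : ℕ) : Finset ℕ :=
  (insert k (Finset.Icc 1 m)).filter (fun z => z ∈ T m g r k)

/-! ### Jobs and one-shot scheduling -/

variable {ι : Type*}

/-- The exact machine type of a job `J`: the least `z ∈ M` with `s J ≤ g z`. -/
def mty (m : ℕ) (g : ℕ → ℝ) (s : ι → ℝ) (J : ι) : ℕ :=
  sInf {z | 1 ≤ z ∧ z ≤ m ∧ s J ≤ g z}

/-- Total size of a finite set of jobs. -/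
def Ssum (s : ι → ℝ) (W : Finset ι) : ℝ := ∑ J ∈ W, s J

/-- `k0f X`: the highest-indexed exact machine type among the jobs of `X`. -/
def k0f (m : ℕ) (g : ℕ → ℝ) (s : ι → ℝ) (X : Finset ι) : ℕ :=
  X.sup (fun J => mty m g s J)

/-- `H z X`: the jobs of `X` whose exact machine type lies in the tree rooted at `z`. -/
def H (m : ℕ) (g r : ℕ → ℝ) (s : ι → ℝ) (z : ℕ) (X : Finset ι) : Finset ι :=
  X.filter (fun J => mty m g s J ∈ A m g r z)

/-- `SH X z := S(H_z(X))`. -/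
def SH (m : ℕ) (g r : ℕ → ℝ) (s : ι → ℝ) (X : Finset ι) (z : ℕ) : ℝ :=
  Ssum s (H m g r s z X)

/-- Feasibility of a machine configuration `w : M → ℕ` for the job set `X`. -/
def Feasible (m : ℕ) (g : ℕ → ℝ) (s : ι → ℝ) (X : Finset ι) (w : ℕ → ℕ) : Prop :=
  ∀ i, 1 ≤ i → i ≤ m →
    Ssum s (X.filter (fun J => i ≤ mty m g s J)) ≤ ∑ z ∈ Finset.Icc i m, (w z : ℝ) * g z

/-- The cost of a machine configuration. -/
def cost (m : ℕ) (r : ℕ → ℝ) (w : ℕ → ℕ) : ℝ :=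
  ∑ z ∈ Finset.Icc 1 m, (w z : ℝ) * r z

/-- The optimal one-shot scheduling cost for a job set `X`. -/
def OPT1 (m : ℕ) (g r : ℕ → ℝ) (s : ι → ℝ) (X : Finset ι) : ℝ :=
  sInf {c : ℝ | ∃ w : ℕ → ℕ, Feasible m g s X w ∧ c = cost m r w}

/-- The fractional machine configuration `cn_{z*}` for the job set `X`, with
highest-indexed machine type `zs`.  A node `i ∈ T(zs) \ {zs}` is the boundary
type `i*` exactly when `∑_{z ∈ T(zs), z > i} S(H_z) ≤ cn(zs)·g(zs) <
∑_{z ∈ T(zs), z ≥ i} S(H_z)`; nodes above the boundary get `0`,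
nodes below it get `S(H_i)/g_i`. -/
def cn (m : ℕ) (g r : ℕ → ℝ) (s : ι → ℝ) (X : Finset ι) (zs i : ℕ) : ℝ :=
  let B : ℝ := (⌈SH m g r s X zs / g zs⌉₊ : ℝ) * g zs
  let Sge : ℝ := ∑ z ∈ (TIcc m g r zs).filter (fun z => i ≤ z), SH m g r s X z
  let Sgt : ℝ := ∑ z ∈ (TIcc m g r zs).filter (fun z => i < z), SH m g r s X z
  if i = zs then (⌈SH m g r s X zs / g zs⌉₊ : ℝ)
  else if i ∈ T m g r zs then
    (if Sgt ≤ B ∧ B < Sge then (Sge - B) / g i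
     else if B < Sgt then SH m g r s X i / g i
     else 0)
  else 0

/-- `cn_{zs}` is decent: for every strict ancestor `zt` of `zs`, the total cost of
the machines of types in `T(zs) ∩ A(zt)` is at most the cost of one type-`zt` machine. -/
def decent (m : ℕ) (g r : ℕ → ℝ) (s : ι → ℝ) (X : Finset ι) (zs : ℕ) : Prop :=
  ∀ zt ∈ P m g r zs, zt ≠ zs →
    (∑ z ∈ (TIcc m g r zs).filter (fun z => z ∈ A m g r zt), cn m g r s X zs z * r z) ≤ r zt

/-- `z⋄(X)`: the least `z* ∈ P(k0(X))` such that `cn_{z*}` is decent. -/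
def zdia (m : ℕ) (g r : ℕ → ℝ) (s : ι → ℝ) (X : Finset ι) : ℕ :=
  sInf {zs | zs ∈ P m g r (k0f m g s X) ∧ decent m g r s X zs}

/-- The child of `zd` whose subtree contains node `k`. -/
def chil (m : ℕ) (g r : ℕ → ℝ) (zd k : ℕ) : ℕ :=
  sInf {i | p m g r i = zd ∧ k ∈ A m g r i}

/-- The node `i ∈ T(zd)` whose subtree contains node `k`. -/
def idxT (m : ℕ) (g r : ℕ → ℝ) (zd k : ℕ) : ℕ :=
  sInf {i | i ∈ T m g r zd ∧ k ∈ A m g r i}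

/-- The children `f(zd)` of node `zd`, as a `Finset`. -/
def fchFin (m : ℕ) (g r : ℕ → ℝ) (zd : ℕ) : Finset ℕ :=
  (Finset.Icc 1 m).filter (fun z => p m g r z = zd)

/-- The cost `r̃(X)(J)` charged to the job `J` of the job set `X`. -/
def charge (m : ℕ) (g r : ℕ → ℝ) (s : ι → ℝ) (X : Finset ι) (J : ι) : ℝ :=
  let zd := zdia m g r s X
  let ρ : ℕ → ℝ := fun i => r i / g i
  let Hh := X.filter (fun J' => mty m g s J' = zd)
  let c : ℝ := Ssum s Hh * ρ zd + ∑ i ∈ fchFin m g r zd, SH m g r s X i * ρ i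
  if mty m g s J ∈ A m g r zd then
    if g zd ≤ SH m g r s X zd then s J * ρ zd
    else if r zd < c then
      if mty m g s J = zd then s J * ρ zd
      else
        s J * (ρ (chil m g r zd (mty m g s J)) -
          (ρ (chil m g r zd (mty m g s J)) - ρ zd) *
            ((c - r zd) /
              (∑ i ∈ fchFin m g r zd, ∑ J' ∈ H m g r s i X, s J' * (ρ i - ρ zd))))
    else
      if mty m g s J = zd then s J * ρ zd * (1 + (r zd - c) / (Ssum s Hh * ρ zd))
      else s J * ρ (chil m g r zd (mty m g s J))
  else s J * ρ (idxT m g r zd (mty m g s J))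

end

end BSHM

/-!
The parent map makes the machine types a forest, and `T k` is a cut of it below `k`: every
type `z ≤ k` has an ancestor in `T k`. Applied to `k0(X) ≤ k0(Y) ≤ z⋄(Y)`, this gives an
ancestor `t ∈ T(z⋄(Y))` of `k0(X)`. It suffices to show that `cn^X_t` is decent: then
`z⋄(X) ≤ t`, and as both lie on the chain `P(k0(X))`, `t` is an ancestor of `z⋄(X)`.

Decency is inherited from `cn^Y_{z⋄(Y)}`. A strict ancestor `zt` of `t` is one of `z⋄(Y)`, and
the capacity a configuration provides on the machine types `≥ w` telescopes to
`max (load on types ≥ w) (capacity of the top type)`. This capacity is larger for `Y` than for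
`X` at every `w`; when `t ≠ z⋄(Y)`, the rounding loss `g t` at the top type of `cn^X_t` is paid
for by a job of `Y` of type `k0(Y) > t`. As the cost per unit of capacity `r / g` is
nondecreasing along `T(z⋄(Y))`, Abel summation turns this domination of suffix capacities into
domination of the costs charged to `zt`.
-/

namespace BSHM

lemma sum_mul_le_sum_mul_of_sum_filter_le {α R : Type*} [LinearOrder α] [CommRing R]
    [LinearOrder R] [IsStrictOrderedRing R] (F : Finset α) {ρ a b : α → R}
    (hρ0 : ∀ z ∈ F, 0 ≤ ρ z) (hρ : MonotoneOn ρ F)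
    (hab : ∀ w ∈ F, ∑ z ∈ F with w ≤ z, a z ≤ ∑ z ∈ F with w ≤ z, b z) :
    ∑ z ∈ F, ρ z * a z ≤ ∑ z ∈ F, ρ z * b z := by
  induction F using Finset.induction_on_min generalizing ρ with
  | empty => simp
  | insert c F hcF ih =>
    have hc : c ∉ F := fun h => lt_irrefl c (hcF c h)
    have hcmem : c ∈ insert c F := Finset.mem_insert_self c F
    have split (x : α → R) : ∑ z ∈ insert c F, ρ z * x z
        = ρ c * ∑ z ∈ insert c F, x z + ∑ z ∈ F, (ρ z - ρ c) * x z := by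
      simp only [Finset.sum_insert hc, sub_mul, Finset.sum_sub_distrib, ← Finset.mul_sum]
      ring
    have hall : (insert c F).filter (c ≤ ·) = insert c F :=
      Finset.filter_true_of_mem fun z hz => by
        rcases Finset.mem_insert.1 hz with rfl | hz
        exacts [le_rfl, (hcF z hz).le]
    have htail : ∑ z ∈ F, (ρ z - ρ c) * a z ≤ ∑ z ∈ F, (ρ z - ρ c) * b z := by
      refine ih (fun z hz => sub_nonneg.2 (hρ hcmem (Finset.mem_insert_of_mem hz) (hcF z hz).le))
        (fun x hx y hy hxy => sub_le_sub_right
          (hρ (Finset.mem_insert_of_mem hx) (Finset.mem_insert_of_mem hy) hxy) _)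
        fun w hw => ?_
      have hF : (insert c F).filter (w ≤ ·) = F.filter (w ≤ ·) := by
        rw [Finset.filter_insert, if_neg (hcF w hw).not_ge]
      simpa only [hF] using hab w (Finset.mem_insert_of_mem hw)
    have hhead : ρ c * ∑ z ∈ insert c F, a z ≤ ρ c * ∑ z ∈ insert c F, b z :=
      mul_le_mul_of_nonneg_left (by simpa only [hall] using hab c hcmem) (hρ0 c hcmem)
    rw [split a, split b]
    exact add_le_add hhead htail

lemma sum_filter_le_eq_ite_add {M : Type*} [AddCommMonoid M] (F : Finset ℕ) (f : ℕ → M)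
    (w : ℕ) :
    ∑ z ∈ F with w ≤ z, f z = (if w ∈ F then f w else 0) + ∑ z ∈ F with w + 1 ≤ z, f z := by
  rw [Finset.sum_filter, Finset.sum_filter, ← Finset.sum_ite_eq, ← Finset.sum_add_distrib]
  refine Finset.sum_congr rfl fun z _ => ?_
  split_ifs <;> first | omega | simp

lemma lt_of_lt_apply_one {β : Type*} [Preorder β] {f : ℕ → β} {m : ℕ} {a : β} (h1 : a < f 1)
    (hf : ∀ i j, 1 ≤ i → i < j → j ≤ m → f i < f j) {z : ℕ} (hz1 : 1 ≤ z) (hzm : z ≤ m) :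
    a < f z := by
  rcases hz1.eq_or_lt with rfl | hz1
  · exact h1
  · exact h1.trans (hf 1 z le_rfl hz1 hzm)

section Tree

variable {m : ℕ} {g r : ℕ → ℝ}

lemma p_mem_pset {i : ℕ} (h : pdef m g r i) : p m g r i ∈ pset m g r i := Nat.sInf_mem h

lemma lt_p {i : ℕ} (h : pdef m g r i) : i < p m g r i := (p_mem_pset h).2.1

lemma p_le {i : ℕ} (h : pdef m g r i) : p m g r i ≤ m := (p_mem_pset h).1

lemma rho_p_lt {i : ℕ} (h : pdef m g r i) : r (p m g r i) / g (p m g r i) < r i / g i :=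
  (p_mem_pset h).2.2

lemma p_eq_zero_of_not_pdef {i : ℕ} (h : ¬ pdef m g r i) : p m g r i = 0 := by
  rw [pdef, Set.not_nonempty_iff_eq_empty] at h
  rw [p, h, Nat.sInf_empty]

lemma pdef_of_p_eq {i j : ℕ} (hij : p m g r i = p m g r j) (hj : pdef m g r j) :
    pdef m g r i := by
  by_contra hi
  have := lt_p hj
  rw [← hij, p_eq_zero_of_not_pdef hi] at this
  omega

lemma rho_le_of_lt_of_lt_p {i j : ℕ} (hij : i < j) (hjm : j ≤ m)
    (hjp : pdef m g r i → j < p m g r i) : r i / g i ≤ r j / g j := by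
  by_contra! hc
  have hj : j ∈ pset m g r i := ⟨hjm, hij, hc⟩
  exact (hjp ⟨j, hj⟩).not_ge (Nat.sInf_le hj)

lemma pdef_and_p_le_p {a b : ℕ} (ha : pdef m g r a) (hab : a ≤ b) (hb : b < p m g r a) :
    pdef m g r b ∧ p m g r b ≤ p m g r a := by
  have hρ : r a / g a ≤ r b / g b := by
    rcases hab.eq_or_lt with rfl | hab
    · exact le_rfl
    · exact rho_le_of_lt_of_lt_p hab (hb.le.trans (p_le ha)) fun _ => hb
  have hpa : p m g r a ∈ pset m g r b := ⟨p_le ha, hb, (rho_p_lt ha).trans_le hρ⟩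
  exact ⟨⟨_, hpa⟩, Nat.sInf_le hpa⟩

lemma le_of_mem_P {a b : ℕ} (h : b ∈ P m g r a) : a ≤ b := by
  induction h with
  | refl => exact le_rfl
  | tail _ hstep ih => exact ih.trans (hstep.2 ▸ lt_p hstep.1).le

lemma le_m_of_mem_P {a b : ℕ} (ham : a ≤ m) (h : b ∈ P m g r a) : b ≤ m := by
  induction h with
  | refl => exact ham
  | tail _ hstep _ => exact hstep.2 ▸ p_le hstep.1

lemma p_mem_P {a b : ℕ} (h : b ∈ P m g r a) (hb : pdef m g r b) : p m g r b ∈ P m g r a :=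
  Relation.ReflTransGen.tail h ⟨hb, rfl⟩

lemma pdef_and_mem_P_p {a b : ℕ} (h : b ∈ P m g r a) (hne : b ≠ a) :
    pdef m g r a ∧ b ∈ P m g r (p m g r a) := by
  rcases Relation.ReflTransGen.cases_head h with rfl | ⟨c, hac, hcb⟩
  · exact absurd rfl hne
  · exact ⟨hac.1, hac.2 ▸ hcb⟩

lemma exists_mem_P_maximal {a n : ℕ} (han : a ≤ n) :
    ∃ c ∈ P m g r a, c ≤ n ∧ (pdef m g r c → n < p m g r c) := by
  have hc : Nat.findGreatest (· ∈ P m g r a) n ∈ P m g r a :=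
    Nat.findGreatest_spec han Relation.ReflTransGen.refl
  refine ⟨_, hc, Nat.findGreatest_le n, fun hd => ?_⟩
  by_contra! hpn
  exact (lt_p hd).not_ge (Nat.le_findGreatest hpn (p_mem_P hc hd))

lemma exists_mem_P_not_pdef {k : ℕ} (hkm : k ≤ m) : ∃ z ∈ P m g r k, ¬ pdef m g r z := by
  obtain ⟨z, hz, -, hroot⟩ := exists_mem_P_maximal (m := m) (g := g) (r := r) hkm
  exact ⟨z, hz, fun hd => (hroot hd).not_ge (p_le hd)⟩

lemma p_mem_P_of_le {a b : ℕ} (ha : pdef m g r a) (hab : a ≤ b) (hbp : b ≤ p m g r a) :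
    p m g r a ∈ P m g r b := by
  obtain ⟨c, hc, hcp, hroot⟩ := exists_mem_P_maximal (m := m) (g := g) (r := r) hbp
  rcases hcp.eq_or_lt with rfl | hcp
  · exact hc
  obtain ⟨hdc, hpc⟩ := pdef_and_p_le_p ha (hab.trans (le_of_mem_P hc)) hcp
  exact absurd (hroot hdc) hpc.not_gt

lemma mem_P_of_le_of_le {a b c : ℕ} (h : c ∈ P m g r a) (hab : a ≤ b) (hbc : b ≤ c) :
    c ∈ P m g r b := by
  induction h using Relation.ReflTransGen.head_induction_on generalizing b with
  | refl => exact le_antisymm hbc hab ▸ Relation.ReflTransGen.refl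
  | @head a' a'' step hrest ih =>
    rcases le_or_gt a'' b with hb | hb
    · exact ih hb hbc
    · rw [step.2] at hb hrest
      exact (p_mem_P_of_le step.1 hab hb.le).trans hrest

lemma mem_A_of_le_of_le {w z zt : ℕ} (hw : w ∈ A m g r zt) (hwz : w ≤ z) (hzt : z ≤ zt) :
    z ∈ A m g r zt :=
  ⟨hw.1.trans hwz, hzt.trans (le_m_of_mem_P hw.2.1 hw.2.2), mem_P_of_le_of_le hw.2.2 hwz hzt⟩

lemma lt_of_mem_y_of_mem_P {z w k : ℕ} (hz : z ∈ y m g r w) (hw : w ∈ P m g r k) : z < k := by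
  by_contra! hkz
  obtain ⟨-, -, hzw, hpzw⟩ := hz
  obtain ⟨hdz, hwp⟩ := pdef_and_mem_P_p (mem_P_of_le_of_le hw hkz hzw.le) hzw.ne'
  have := le_of_mem_P hwp
  have := lt_p (pdef_of_p_eq hpzw.symm hdz)
  omega

lemma p_mem_P_of_mem_y {k z t : ℕ} (hz : z ∈ P m g r k) (ht : t ∈ y m g r z)
    (hd : pdef m g r t) : p m g r t ∈ P m g r k ∧ k < p m g r t := by
  have hdz : pdef m g r z := pdef_of_p_eq ht.2.2.2.symm hd
  rw [ht.2.2.2]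
  exact ⟨p_mem_P hz hdz, (le_of_mem_P hz).trans_lt (lt_p hdz)⟩

lemma self_mem_T (k : ℕ) : k ∈ T m g r k := Or.inl rfl

lemma mem_T_iff {z k : ℕ} : z ∈ T m g r k ↔ z = k ∨ ∃ w ∈ P m g r k, z ∈ y m g r w := by
  simp [T]

lemma mem_T_of_mem_y {z w k : ℕ} (hw : w ∈ P m g r k) (hz : z ∈ y m g r w) : z ∈ T m g r k :=
  mem_T_iff.2 (Or.inr ⟨w, hw, hz⟩)

@[simp]
lemma mem_TIcc {z k : ℕ} : z ∈ TIcc m g r k ↔ z ∈ T m g r k := by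
  refine ⟨fun h => (Finset.mem_filter.1 h).2, fun h => Finset.mem_filter.2 ⟨?_, h⟩⟩
  rcases mem_T_iff.1 h with rfl | ⟨w, -, hz⟩
  · exact Finset.mem_insert_self _ _
  · exact Finset.mem_insert_of_mem (Finset.mem_Icc.2 ⟨hz.1, hz.2.1⟩)

lemma le_of_mem_T {z k : ℕ} (h : z ∈ T m g r k) : z ≤ k := by
  rcases mem_T_iff.1 h with rfl | ⟨w, hw, hz⟩
  · exact le_rfl
  · exact (lt_of_mem_y_of_mem_P hz hw).le

lemma bounds_of_mem_T {z k : ℕ} (hk1 : 1 ≤ k) (hkm : k ≤ m) (h : z ∈ T m g r k) :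
    1 ≤ z ∧ z ≤ m := by
  rcases mem_T_iff.1 h with rfl | ⟨w, -, hz⟩
  · exact ⟨hk1, hkm⟩
  · exact ⟨hz.1, hz.2.1⟩

lemma lt_of_mem_T_of_ne {t k a : ℕ} (ht : t ∈ T m g r k) (hne : t ≠ k) (hk : k ∈ P m g r a) :
    t < a := by
  obtain ⟨w, hw, htw⟩ := (mem_T_iff.1 ht).resolve_left hne
  exact lt_of_mem_y_of_mem_P htw (hk.trans hw)

lemma rho_le_of_mem_T {z b k : ℕ} (hkm : k ≤ m) (hz : z ∈ T m g r k) (hzb : z < b)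
    (hbk : b ≤ k) : r z / g z ≤ r b / g b := by
  obtain ⟨w, hw, hzw⟩ := (mem_T_iff.1 hz).resolve_left (by omega)
  refine rho_le_of_lt_of_lt_p hzb (hbk.trans hkm) fun hdz => ?_
  have := (p_mem_P_of_mem_y hw hzw hdz).2
  omega

lemma mem_P_and_lt_of_mem_T {t k zt : ℕ} (ht : t ∈ T m g r k) (hzt : zt ∈ P m g r t)
    (hne : zt ≠ t) : zt ∈ P m g r k ∧ k < zt := by
  obtain ⟨hdt, hztp⟩ := pdef_and_mem_P_p hzt hne
  rcases mem_T_iff.1 ht with rfl | ⟨z1, hz1, htz1⟩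
  · exact ⟨hzt, (lt_p hdt).trans_le (le_of_mem_P hztp)⟩
  · obtain ⟨hpk, hkp⟩ := p_mem_P_of_mem_y hz1 htz1 hdt
    exact ⟨hpk.trans hztp, hkp.trans_le (le_of_mem_P hztp)⟩

lemma T_subset_T {t k : ℕ} (ht : t ∈ T m g r k) : T m g r t ⊆ T m g r k := by
  intro z hz
  rcases mem_T_iff.1 hz with rfl | ⟨w, hw, hzw⟩
  · exact ht
  rcases eq_or_ne w t with rfl | hwt
  · rcases mem_T_iff.1 ht with rfl | ⟨z1, hz1, hwz1⟩
    · exact hz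
    · exact mem_T_of_mem_y hz1
        ⟨hzw.1, hzw.2.1, hzw.2.2.1.trans hwz1.2.2.1, hzw.2.2.2.trans hwz1.2.2.2⟩
  · exact mem_T_of_mem_y (mem_P_and_lt_of_mem_T ht hw hwt).1 hzw

lemma TIcc_subset_TIcc {t k : ℕ} (ht : t ∈ T m g r k) : TIcc m g r t ⊆ TIcc m g r k :=
  fun _ hz => mem_TIcc.2 (T_subset_T ht (mem_TIcc.1 hz))

lemma mem_T_of_lt_p {i k : ℕ} (hi1 : 1 ≤ i) (hik : i ≤ k) (hkm : k ≤ m)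
    (hp : pdef m g r i → k < p m g r i) : i ∈ T m g r k := by
  rcases hik.eq_or_lt with rfl | hik
  · exact self_mem_T i
  by_cases hdi : pdef m g r i
  · have hpk : p m g r i ∈ P m g r k := mem_P_of_le_of_le
      (Relation.ReflTransGen.single ⟨hdi, rfl⟩) hik.le (hp hdi).le
    rcases Relation.ReflTransGen.cases_tail hpk with hpk' | ⟨_, hz, -, hpz⟩
    · exact absurd hpk' (hp hdi).ne'
    · exact mem_T_of_mem_y hz ⟨hi1, hik.le.trans hkm, hik.trans_le (le_of_mem_P hz), hpz⟩
  · obtain ⟨z, hz, hdz⟩ := exists_mem_P_not_pdef (g := g) (r := r) hkm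
    refine mem_T_of_mem_y hz ⟨hi1, hik.le.trans hkm, hik.trans_le (le_of_mem_P hz), ?_⟩
    rw [p_eq_zero_of_not_pdef hdi, p_eq_zero_of_not_pdef hdz]

lemma exists_mem_T_mem_P {z k : ℕ} (hz1 : 1 ≤ z) (hzk : z ≤ k) (hkm : k ≤ m) :
    ∃ i ∈ T m g r k, i ∈ P m g r z := by
  obtain ⟨i, hi, hik, hp⟩ := exists_mem_P_maximal (m := m) (g := g) (r := r) hzk
  exact ⟨i, mem_T_of_lt_p (hz1.trans (le_of_mem_P hi)) hik hkm hp, hi⟩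

lemma filter_mem_A_filter_le {k zt w : ℕ} (hk : k < zt) (hw : w ∈ A m g r zt) :
    ((TIcc m g r k).filter (· ∈ A m g r zt)).filter (w ≤ ·) = (TIcc m g r k).filter (w ≤ ·) := by
  ext z
  simp only [Finset.mem_filter, mem_TIcc]
  refine ⟨fun h => ⟨h.1.1, h.2⟩, fun h => ⟨⟨h.1, ?_⟩, h.2⟩⟩
  exact mem_A_of_le_of_le hw h.2 ((le_of_mem_T h.1).trans hk.le)

end Tree

section Jobs

variable {ι : Type*} {m : ℕ} {g r : ℕ → ℝ} {s : ι → ℝ}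

lemma mty_bounds (hm : 1 ≤ m) {J : ι} (hJ : s J ≤ g m) :
    1 ≤ mty m g s J ∧ mty m g s J ≤ m := by
  obtain ⟨h1, h2, -⟩ :=
    Nat.sInf_mem (s := {z | 1 ≤ z ∧ z ≤ m ∧ s J ≤ g z}) ⟨m, hm, le_rfl, hJ⟩
  exact ⟨h1, h2⟩

lemma g_lt_of_lt_mty {J : ι} {t : ℕ} (ht : 1 ≤ t) (htJ : t < mty m g s J) : g t < s J := by
  obtain ⟨-, hm, -⟩ := Nat.sInf_mem (Nat.nonempty_of_pos_sInf ((Nat.zero_le t).trans_lt htJ))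
  have := Nat.notMem_of_lt_sInf htJ
  simp only [Set.mem_ofPred_eq, not_and, not_le] at this
  exact this ht (htJ.le.trans hm)

lemma k0f_le (hm : 1 ≤ m) {W : Finset ι} (hW : ∀ J ∈ W, s J ≤ g m) : k0f m g s W ≤ m :=
  Finset.sup_le fun J hJ => (mty_bounds hm (hW J hJ)).2

lemma one_le_k0f (hm : 1 ≤ m) {W : Finset ι} (hne : W.Nonempty) (hW : ∀ J ∈ W, s J ≤ g m) :
    1 ≤ k0f m g s W := by
  obtain ⟨J, hJ⟩ := hne
  exact (mty_bounds hm (hW J hJ)).1.trans (Finset.le_sup hJ)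

lemma SH_nonneg {W : Finset ι} (hW : ∀ J ∈ W, 0 ≤ s J) (z : ℕ) : 0 ≤ SH m g r s W z :=
  Finset.sum_nonneg fun J hJ => hW J (Finset.mem_filter.1 hJ).1

lemma SH_mono {X Y : Finset ι} (hXY : X ⊆ Y) (hY : ∀ J ∈ Y, 0 ≤ s J) (z : ℕ) :
    SH m g r s X z ≤ SH m g r s Y z :=
  Finset.sum_le_sum_of_subset_of_nonneg (Finset.filter_subset_filter _ hXY)
    fun J hJ _ => hY J (Finset.mem_filter.1 hJ).1

lemma le_SH {W : Finset ι} (hW : ∀ J ∈ W, 0 ≤ s J) {J : ι} (hJ : J ∈ W) {z : ℕ}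
    (hJz : mty m g s J ∈ A m g r z) : s J ≤ SH m g r s W z :=
  Finset.single_le_sum (f := s) (fun J' hJ' => hW J' (Finset.mem_filter.1 hJ').1)
    (Finset.mem_filter.2 ⟨hJ, hJz⟩)

lemma zdia_spec (hm : 1 ≤ m) {W : Finset ι} (hW : ∀ J ∈ W, s J ≤ g m) :
    zdia m g r s W ∈ P m g r (k0f m g s W) ∧ decent m g r s W (zdia m g r s W) := by
  obtain ⟨z, hz, hroot⟩ := exists_mem_P_not_pdef (g := g) (r := r) (k0f_le hm hW)
  have hne : {zs | zs ∈ P m g r (k0f m g s W) ∧ decent m g r s W zs}.Nonempty :=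
    ⟨z, hz, fun zt hzt hne => absurd (pdef_and_mem_P_p hzt hne).1 hroot⟩
  exact Nat.sInf_mem hne

lemma zdia_bounds (hm : 1 ≤ m) {W : Finset ι} (hne : W.Nonempty) (hW : ∀ J ∈ W, s J ≤ g m) :
    1 ≤ zdia m g r s W ∧ zdia m g r s W ≤ m := by
  obtain ⟨hP, -⟩ := zdia_spec (r := r) hm hW
  exact ⟨(one_le_k0f hm hne hW).trans (le_of_mem_P hP), le_m_of_mem_P (k0f_le hm hW) hP⟩

lemma zdia_le {W : Finset ι} {t : ℕ} (ht : t ∈ P m g r (k0f m g s W))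
    (hdec : decent m g r s W t) : zdia m g r s W ≤ t :=
  Nat.sInf_le ⟨ht, hdec⟩

lemma g_lt_SH_zdia (hm : 1 ≤ m) {Y : Finset ι} (hY : Y.Nonempty) (hs0 : ∀ J ∈ Y, 0 ≤ s J)
    (hsm : ∀ J ∈ Y, s J ≤ g m) {t : ℕ} (ht1 : 1 ≤ t) (ht : t ∈ T m g r (zdia m g r s Y))
    (hne : t ≠ zdia m g r s Y) : g t < SH m g r s Y (zdia m g r s Y) := by
  obtain ⟨hzP, -⟩ := zdia_spec (r := r) hm hsm
  obtain ⟨J, hJ, hJmax⟩ := Finset.exists_mem_eq_sup Y hY (mty m g s)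
  have hJA : mty m g s J ∈ A m g r (zdia m g r s Y) :=
    hJmax ▸ ⟨one_le_k0f hm hY hsm, k0f_le hm hsm, hzP⟩
  have htJ : t < mty m g s J := hJmax ▸ lt_of_mem_T_of_ne ht hne hzP
  exact (g_lt_of_lt_mty ht1 htJ).trans_le (le_SH hs0 hJ hJA)

end Jobs

section Configuration

variable {ι : Type*} (m : ℕ) (g r : ℕ → ℝ) (s : ι → ℝ)

noncomputable def topCap (W : Finset ι) (k : ℕ) : ℝ := ⌈SH m g r s W k / g k⌉₊ * g k

noncomputable def loadAbove (W : Finset ι) (k w : ℕ) : ℝ :=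
  ∑ z ∈ TIcc m g r k with w ≤ z, SH m g r s W z

noncomputable def capAbove (W : Finset ι) (k w : ℕ) : ℝ :=
  ∑ z ∈ TIcc m g r k with w ≤ z, cn m g r s W k z * g z

variable {m g r s}

lemma topCap_nonneg {W : Finset ι} {k : ℕ} (hgk : 0 ≤ g k) : 0 ≤ topCap m g r s W k :=
  mul_nonneg (Nat.cast_nonneg _) hgk

lemma SH_le_topCap {W : Finset ι} {k : ℕ} (hgk : 0 < g k) :
    SH m g r s W k ≤ topCap m g r s W k :=
  (div_le_iff₀ hgk).1 (Nat.le_ceil _)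

lemma topCap_le_SH_add {W : Finset ι} (hW : ∀ J ∈ W, 0 ≤ s J) {k : ℕ} (hgk : 0 < g k) :
    topCap m g r s W k ≤ SH m g r s W k + g k := by
  have := Nat.ceil_lt_add_one (div_nonneg (SH_nonneg (m := m) (g := g) (r := r) hW k) hgk.le)
  rw [topCap, ← le_div_iff₀ hgk, add_div, div_self hgk.ne']
  exact this.le

lemma topCap_mono {X Y : Finset ι} (hXY : X ⊆ Y) (hY : ∀ J ∈ Y, 0 ≤ s J) {k : ℕ}
    (hgk : 0 ≤ g k) : topCap m g r s X k ≤ topCap m g r s Y k :=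
  mul_le_mul_of_nonneg_right (Nat.cast_le.2 (Nat.ceil_mono
    (div_le_div_of_nonneg_right (SH_mono hXY hY k) hgk))) hgk

lemma cn_eq_zero_of_notMem_T {W : Finset ι} {k z : ℕ} (hz : z ∉ T m g r k) :
    cn m g r s W k z = 0 := by
  have hzk : z ≠ k := fun h => hz (by rw [h]; exact self_mem_T k)
  simp [cn, hzk, hz]

lemma sum_cn_mul_eq_of_subset {W : Finset ι} {t : ℕ} {S F : Finset ℕ} (f : ℕ → ℝ)
    (hSF : S ⊆ F) (hS : ∀ z ∈ F, z ∈ T m g r t → z ∈ S) :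
    ∑ z ∈ S, cn m g r s W t z * f z = ∑ z ∈ F, cn m g r s W t z * f z :=
  Finset.sum_subset hSF fun z hzF hzS => by
    rw [cn_eq_zero_of_notMem_T fun hz => hzS (hS z hzF hz), zero_mul]

lemma cn_self_mul_g {W : Finset ι} {k : ℕ} : cn m g r s W k k * g k = topCap m g r s W k := by
  simp [cn, topCap]

lemma cn_mul_g {W : Finset ι} (hW : ∀ J ∈ W, 0 ≤ s J) {k z : ℕ} (hz : z ∈ T m g r k)
    (hzk : z ≠ k) (hgz : g z ≠ 0) :
    cn m g r s W k z * g z = max (loadAbove m g r s W k z) (topCap m g r s W k)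
      - max (loadAbove m g r s W k (z + 1)) (topCap m g r s W k) := by
  have hload : loadAbove m g r s W k z = SH m g r s W z + loadAbove m g r s W k (z + 1) := by
    rw [loadAbove, sum_filter_le_eq_ite_add, if_pos (mem_TIcc.2 hz)]
    rfl
  have hSH := SH_nonneg (m := m) (g := g) (r := r) hW z
  simp only [cn, if_neg hzk, if_pos hz, Nat.lt_iff_add_one_le]
  rw [← topCap.eq_1, ← loadAbove.eq_1, ← loadAbove.eq_1, hload]
  split_ifs <;> simp only [div_mul_cancel₀ _ hgz, zero_mul] <;> grind

lemma capAbove_eq {W : Finset ι} (hW : ∀ J ∈ W, 0 ≤ s J)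
    (hg : ∀ z, 1 ≤ z → z ≤ m → 0 < g z) {k : ℕ} (hk1 : 1 ≤ k) (hkm : k ≤ m) {w : ℕ}
    (hwk : w ≤ k) :
    capAbove m g r s W k w = max (loadAbove m g r s W k w) (topCap m g r s W k) := by
  induction hwk using Nat.decreasingInduction with
  | self =>
    have htop : (TIcc m g r k).filter (k ≤ ·) = {k} := by
      ext z
      simp only [Finset.mem_filter, mem_TIcc, Finset.mem_singleton]
      refine ⟨fun h => le_antisymm (le_of_mem_T h.1) h.2, ?_⟩
      rintro rfl
      exact ⟨self_mem_T z, le_rfl⟩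
    rw [capAbove, loadAbove, htop, Finset.sum_singleton, Finset.sum_singleton, cn_self_mul_g,
      max_eq_right (SH_le_topCap (hg k hk1 hkm))]
  | of_succ w hwk ih =>
    have hcap : capAbove m g r s W k w =
        (if w ∈ TIcc m g r k then cn m g r s W k w * g w else 0) + capAbove m g r s W k (w + 1) :=
      sum_filter_le_eq_ite_add _ _ w
    have hload : loadAbove m g r s W k w =
        (if w ∈ TIcc m g r k then SH m g r s W w else 0) + loadAbove m g r s W k (w + 1) :=
      sum_filter_le_eq_ite_add _ _ w
    rw [hcap, ih]
    split_ifs at hload ⊢ with hw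
    · have hwT := mem_TIcc.1 hw
      obtain ⟨hw1, hwm⟩ := bounds_of_mem_T hk1 hkm hwT
      rw [cn_mul_g hW hwT hwk.ne (hg w hw1 hwm).ne']
      ring
    · rw [hload, zero_add, zero_add]

end Configuration

section Monotonicity

variable {ι : Type*} {m : ℕ} {g r : ℕ → ℝ} {s : ι → ℝ} {X Y : Finset ι}

lemma capAbove_le_capAbove_zdia (hm : 1 ≤ m) (hg : ∀ z, 1 ≤ z → z ≤ m → 0 < g z)
    (hXY : X ⊆ Y) (hY : Y.Nonempty) (hs0 : ∀ J ∈ Y, 0 ≤ s J) (hsm : ∀ J ∈ Y, s J ≤ g m)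
    {t w : ℕ} (ht : t ∈ T m g r (zdia m g r s Y)) (hw : w ∈ T m g r (zdia m g r s Y)) :
    capAbove m g r s X t w ≤ capAbove m g r s Y (zdia m g r s Y) w := by
  set zY := zdia m g r s Y
  obtain ⟨hzY1, hzYm⟩ := zdia_bounds (r := r) hm hY hsm
  obtain ⟨ht1, htm⟩ := bounds_of_mem_T hzY1 hzYm ht
  have hsX : ∀ J ∈ X, 0 ≤ s J := fun J hJ => hs0 J (hXY hJ)
  rw [capAbove_eq hs0 hg hzY1 hzYm (le_of_mem_T hw)]
  rcases lt_or_ge t w with htw | hwt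
  · have hempty : capAbove m g r s X t w = 0 := Finset.sum_eq_zero fun z hz => by
      have := le_of_mem_T (mem_TIcc.1 (Finset.mem_filter.1 hz).1)
      have := (Finset.mem_filter.1 hz).2
      omega
    exact hempty ▸ le_max_of_le_right (topCap_nonneg (hg zY hzY1 hzYm).le)
  rw [capAbove_eq hsX hg ht1 htm hwt]
  have hload : loadAbove m g r s X t w ≤ loadAbove m g r s Y zY w :=
    calc loadAbove m g r s X t w ≤ ∑ z ∈ TIcc m g r t with w ≤ z, SH m g r s Y z :=
          Finset.sum_le_sum fun z _ => SH_mono hXY hs0 z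
      _ ≤ loadAbove m g r s Y zY w :=
          Finset.sum_le_sum_of_subset_of_nonneg
            (Finset.filter_subset_filter _ (TIcc_subset_TIcc ht)) fun z _ _ => SH_nonneg hs0 z
  refine max_le (le_max_of_le_left hload) ?_
  rcases eq_or_ne t zY with rfl | htY
  · exact le_max_of_le_right (topCap_mono hXY hs0 (hg zY hzY1 hzYm).le)
  have hpair : ({t, zY} : Finset ℕ) ⊆ (TIcc m g r zY).filter (w ≤ ·) := by
    intro z hz
    rcases Finset.mem_insert.1 hz with rfl | hz
    · exact Finset.mem_filter.2 ⟨mem_TIcc.2 ht, hwt⟩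
    · rw [Finset.mem_singleton.1 hz]
      exact Finset.mem_filter.2 ⟨mem_TIcc.2 (self_mem_T zY), le_of_mem_T hw⟩
  refine le_max_of_le_left ?_
  calc topCap m g r s X t ≤ SH m g r s X t + g t := topCap_le_SH_add hsX (hg t ht1 htm)
    _ ≤ SH m g r s Y t + SH m g r s Y zY :=
        add_le_add (SH_mono hXY hs0 t) (g_lt_SH_zdia hm hY hs0 hsm ht1 ht htY).le
    _ = ∑ z ∈ {t, zY}, SH m g r s Y z := (Finset.sum_pair htY).symm
    _ ≤ loadAbove m g r s Y zY w :=
        Finset.sum_le_sum_of_subset_of_nonneg hpair fun z _ _ => SH_nonneg hs0 z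

lemma decent_of_mem_T_zdia (hm : 1 ≤ m) (hg : ∀ z, 1 ≤ z → z ≤ m → 0 < g z)
    (hr : ∀ z, 1 ≤ z → z ≤ m → 0 ≤ r z) (hXY : X ⊆ Y) (hY : Y.Nonempty)
    (hs0 : ∀ J ∈ Y, 0 ≤ s J) (hsm : ∀ J ∈ Y, s J ≤ g m) {t : ℕ}
    (ht : t ∈ T m g r (zdia m g r s Y)) : decent m g r s X t := by
  intro zt hzt hne
  set zY := zdia m g r s Y
  have hdecY := (zdia_spec (r := r) hm hsm).2
  obtain ⟨hzY1, hzYm⟩ := zdia_bounds (r := r) hm hY hsm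
  obtain ⟨hztY, hYzt⟩ := mem_P_and_lt_of_mem_T ht hzt hne
  set F := (TIcc m g r zY).filter (· ∈ A m g r zt)
  have hF {z : ℕ} (hz : z ∈ F) : z ∈ T m g r zY ∧ z ∈ A m g r zt :=
    ⟨mem_TIcc.1 (Finset.mem_filter.1 hz).1, (Finset.mem_filter.1 hz).2⟩
  have hweight {z : ℕ} (hz : z ∈ F) (c : ℝ) : c * r z = r z / g z * (c * g z) := by
    obtain ⟨hz1, hzm⟩ := bounds_of_mem_T hzY1 hzYm (hF hz).1
    field_simp [(hg z hz1 hzm).ne']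
  have hmono : MonotoneOn (fun z => r z / g z) F := fun a ha b hb hab => by
    rcases hab.eq_or_lt with rfl | hab
    · exact le_rfl
    · exact rho_le_of_mem_T hzYm (hF ha).1 hab (le_of_mem_T (hF hb).1)
  have hsuffix (w : ℕ) (hw : w ∈ F) : ∑ z ∈ F with w ≤ z, cn m g r s X t z * g z
      ≤ ∑ z ∈ F with w ≤ z, cn m g r s Y zY z * g z := by
    rw [filter_mem_A_filter_le hYzt (hF hw).2, ← sum_cn_mul_eq_of_subset g
      (Finset.filter_subset_filter _ (TIcc_subset_TIcc ht)) fun z hz hzt =>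
        Finset.mem_filter.2 ⟨mem_TIcc.2 hzt, (Finset.mem_filter.1 hz).2⟩]
    exact capAbove_le_capAbove_zdia hm hg hXY hY hs0 hsm ht (hF hw).1
  calc ∑ z ∈ TIcc m g r t with z ∈ A m g r zt, cn m g r s X t z * r z
      = ∑ z ∈ F, cn m g r s X t z * r z :=
        sum_cn_mul_eq_of_subset r (Finset.filter_subset_filter _ (TIcc_subset_TIcc ht))
          fun z hz hzt => Finset.mem_filter.2 ⟨mem_TIcc.2 hzt, (hF hz).2⟩
    _ = ∑ z ∈ F, r z / g z * (cn m g r s X t z * g z) :=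
        Finset.sum_congr rfl fun z hz => hweight hz _
    _ ≤ ∑ z ∈ F, r z / g z * (cn m g r s Y zY z * g z) :=
        sum_mul_le_sum_mul_of_sum_filter_le F (fun z hz => by
          obtain ⟨hz1, hzm⟩ := bounds_of_mem_T hzY1 hzYm (hF hz).1
          exact div_nonneg (hr z hz1 hzm) (hg z hz1 hzm).le) hmono hsuffix
    _ = ∑ z ∈ F, cn m g r s Y zY z * r z := (Finset.sum_congr rfl fun z hz => hweight hz _).symm
    _ ≤ r zt := hdecY zt hztY hYzt.ne'

end Monotonicity

/-- Let `X ⊆ Y` be nonempty finite sets of jobs with sizes in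
`(0, g m]`.  Then `z⋄(X) ∈ A(i)` for some `i ∈ T(z⋄(Y))`. -/
theorem statement_15 {ι : Type*} (m : ℕ) (g r : ℕ → ℝ) (s : ι → ℝ)
    (X Y : Finset ι)
    (hm : 1 ≤ m)
    (hg1 : 0 < g 1) (hr1 : 0 < r 1)
    (hg : ∀ i j, 1 ≤ i → i < j → j ≤ m → g i < g j)
    (hr : ∀ i j, 1 ≤ i → i < j → j ≤ m → r i < r j)
    (hXY : X ⊆ Y) (hX : X.Nonempty) (hY : Y.Nonempty)
    (hs : ∀ J ∈ Y, 0 < s J ∧ s J ≤ g m) :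
    ∃ i ∈ T m g r (zdia m g r s Y), zdia m g r s X ∈ A m g r i := by
  have hs0 : ∀ J ∈ Y, 0 ≤ s J := fun J hJ => (hs J hJ).1.le
  have hsm : ∀ J ∈ Y, s J ≤ g m := fun J hJ => (hs J hJ).2
  have hsmX : ∀ J ∈ X, s J ≤ g m := fun J hJ => hsm J (hXY hJ)
  obtain ⟨hzYP, -⟩ := zdia_spec (r := r) hm hsm
  obtain ⟨hzXP, -⟩ := zdia_spec (r := r) hm hsmX
  have hk0X : 1 ≤ k0f m g s X := one_le_k0f hm hX hsmX
  have hk0XY : k0f m g s X ≤ zdia m g r s Y := (Finset.sup_mono hXY).trans (le_of_mem_P hzYP)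
  obtain ⟨t, ht, htX⟩ :=
    exists_mem_T_mem_P hk0X hk0XY (zdia_bounds (r := r) hm hY hsm).2
  have hdec : decent m g r s X t :=
    decent_of_mem_T_zdia hm (fun _ => lt_of_lt_apply_one hg1 hg)
      (fun _ h1 h2 => (lt_of_lt_apply_one hr1 hr h1 h2).le) hXY hY hs0 hsm ht
  obtain ⟨hzX1, hzXm⟩ := zdia_bounds (r := r) hm hX hsmX
  exact ⟨t, ht, hzX1, hzXm, mem_P_of_le_of_le htX (le_of_mem_P hzXP) (zdia_le htX hdec)⟩

end BSHM
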